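/- arXiv:2205.00798 — 2 statements merged into one kernel-verified Lean document; each statement's English description precedes it below -/
import Mathlib

section
/- Let F : C ⟶ D be a functor over a groupoid S (i.e., functors p : C ⟶ S and q : D ⟶ S with q ∘ F = p, where S is a groupoid and p, q are isofibrations). If for every object s of S the induced functor between fibers F_s : C_s ⟶ D_s has a right adjoint, then F itself has a right adjoint. -/
open CategoryTheory

universe v₁ v₂ v₃ u₁ u₂ u₃

variable {C : Type u₁} [Category.{v₁} C] {D : Type u₂} [Category.{v₂} D]
  {S : Type u₃} [Groupoid.{v₃} S]

/-- A functor is an isofibration if every isomorphism in the base whose source is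
in the image lifts to an isomorphism in the total category. -/
def IsIsofibration {C : Type u₁} [Category.{v₁} C] {S : Type u₃} [Category.{v₃} S]
    (p : C ⥤ S) : Prop :=
  ∀ {c : C} {s : S} (e : p.obj c ≅ s),
    ∃ (c' : C) (e' : c ≅ c') (h : p.obj c' = s), p.mapIso e' = e ≪≫ eqToIso h.symm

/-- The fiber of a functor `p : C ⥤ S` over an object `s : S`: objects of `C`
mapping to `s` and morphisms mapping to the identity of `s`. -/
structure Fiber {C : Type u₁} [Category.{v₁} C] {S : Type u₃} [Category.{v₃} S]
    (p : C ⥤ S) (s : S) where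
  obj : C
  eq : p.obj obj = s

instance {C : Type u₁} [Category.{v₁} C] {S : Type u₃} [Category.{v₃} S]
    (p : C ⥤ S) (s : S) : Category (Fiber p s) where
  Hom a b := { φ : a.obj ⟶ b.obj // p.map φ = eqToHom (a.eq.trans b.eq.symm) }
  id a := ⟨𝟙 _, by simp⟩
  comp φ ψ := ⟨φ.1 ≫ ψ.1, by simp [φ.2, ψ.2]⟩
  id_comp φ := Subtype.ext (by simp)
  comp_id φ := Subtype.ext (by simp)
  assoc φ ψ χ := Subtype.ext (by simp)

/-- The functor between fibers induced by a functor `F : C ⥤ D` over `S`. -/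
def fiberFunctor {C : Type u₁} [Category.{v₁} C] {D : Type u₂} [Category.{v₂} D]
    {S : Type u₃} [Category.{v₃} S] (p : C ⥤ S) (q : D ⥤ S) (F : C ⥤ D)
    (hcomm : F ⋙ q = p) (s : S) : Fiber p s ⥤ Fiber q s where
  obj a := ⟨F.obj a.obj, by subst hcomm; exact a.eq⟩
  map {a b} φ := ⟨F.map φ.1, by subst hcomm; exact φ.2⟩
  map_id a := Subtype.ext (F.map_id a.obj)
  map_comp φ ψ := Subtype.ext (F.map_comp φ.1 ψ.1)

/-!
Fix `d : D` over `s = q d`. The costructured arrows `F c ⟶ d` with `c` in the fiber over `s`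
and the arrow lying over the identity form the costructured arrow category of the fiber functor
`F_s` at `d`, and including them into the costructured arrow category of `F` at `d` is an
equivalence: it is full because a morphism `φ` with `F φ ≫ k = l` for `k`, `l` over the identity
lies over the identity itself, and essentially surjective because, `S` being a groupoid, the
image under `q` of an arbitrary arrow `F c ⟶ d` is invertible and lifts along `p` to an
isomorphism `c ≅ c'` with `c'` in the fiber over `s`. A right adjoint of `F_s` gives a terminal
object of the first category, hence of the second, for every `d`.
-/

namespace Fiber

variable {S : Type u₃} [Category.{v₃} S] {p : C ⥤ S} {s : S}

@[ext]
lemma hom_ext {a b : Fiber p s} {φ ψ : a ⟶ b} (h : φ.1 = ψ.1) : φ = ψ :=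
  Subtype.ext h

end Fiber

lemma IsIsofibration.exists_iso_lift {p : C ⥤ S} (hp : IsIsofibration p) {c : C} {s : S}
    (f : p.obj c ⟶ s) :
    ∃ (c' : Fiber p s) (e : c ≅ c'.obj), p.map e.hom = f ≫ eqToHom c'.eq.symm := by
  obtain ⟨c', e, h, he⟩ := hp (asIso f)
  exact ⟨⟨c', h⟩, e, by simpa using congrArg Iso.hom he⟩

section

variable {S : Type u₃} [Category.{v₃} S] {p : C ⥤ S} {q : D ⥤ S} (F : C ⥤ D)
  (hcomm : F ⋙ q = p) {s : S}

lemma map_eq_eqToHom_of_fiberFunctor_comp {a b : Fiber p s} {d : Fiber q s}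
    {φ : a.obj ⟶ b.obj} {k : (fiberFunctor p q F hcomm s).obj b ⟶ d}
    {l : (fiberFunctor p q F hcomm s).obj a ⟶ d} (h : F.map φ ≫ k.1 = l.1) :
    p.map φ = eqToHom (a.eq.trans b.eq.symm) := by
  subst hcomm
  have hq : q.map (F.map φ) ≫ q.map k.1 = q.map l.1 :=
    (q.map_comp (F.map φ) k.1).symm.trans (congrArg q.map h)
  erw [k.2, l.2, comp_eqToHom_iff, eqToHom_trans] at hq
  exact hq

def fiberCostructuredArrowInclusion (d : Fiber q s) :
    CostructuredArrow (fiberFunctor p q F hcomm s) d ⥤ CostructuredArrow F d.obj where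
  obj X := CostructuredArrow.mk (Y := X.left.obj) X.hom.1
  map f := CostructuredArrow.homMk f.left.1 (congrArg Subtype.val (CostructuredArrow.w f))

instance (d : Fiber q s) : (fiberCostructuredArrowInclusion F hcomm d).Faithful where
  map_injective h :=
    CostructuredArrow.hom_ext _ _ (Fiber.hom_ext (congrArg CommaMorphism.left h))

instance (d : Fiber q s) : (fiberCostructuredArrowInclusion F hcomm d).Full where
  map_surjective g :=
    ⟨CostructuredArrow.homMk
      ⟨g.left, map_eq_eqToHom_of_fiberFunctor_comp F hcomm (CostructuredArrow.w g)⟩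
      (Fiber.hom_ext (CostructuredArrow.w g)), rfl⟩

end

section

variable {p : C ⥤ S} {q : D ⥤ S} (F : C ⥤ D) (hcomm : F ⋙ q = p) {s : S} (d : Fiber q s)

lemma isEquivalence_fiberCostructuredArrowInclusion (hp : IsIsofibration p) :
    (fiberCostructuredArrowInclusion F hcomm d).IsEquivalence where
  essSurj.mem_essImage Y := by
    subst hcomm
    obtain ⟨c, e, he⟩ := hp.exists_iso_lift (q.map Y.hom ≫ eqToHom d.eq)
    have hc : q.map (F.map e.inv ≫ Y.hom) = eqToHom (c.eq.trans d.eq.symm) := by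
      rw [← cancel_epi (q.map (F.map e.hom)), ← q.map_comp, ← F.map_comp_assoc, e.hom_inv_id,
        F.map_id, Category.id_comp, ← Functor.comp_map, he]
      simp
    let Yc : (fiberFunctor (F ⋙ q) q F rfl s).obj c ⟶ d := ⟨F.map e.inv ≫ Y.hom, hc⟩
    exact ⟨CostructuredArrow.mk Yc, ⟨CostructuredArrow.isoMk e.symm rfl⟩⟩

lemma hasTerminal_costructuredArrow_of_fiber (hp : IsIsofibration p)
    [(fiberFunctor p q F hcomm s).IsLeftAdjoint] :
    Limits.HasTerminal (CostructuredArrow F d.obj) :=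
  have := isEquivalence_fiberCostructuredArrowInclusion F hcomm d hp
  (fiberCostructuredArrowInclusion F hcomm d).asEquivalence.hasTerminal_iff.mp
    (isLeftAdjoint_iff_hasTerminal_costructuredArrow.mp ‹_› d)

end

theorem hasRightAdjoint_of_fiberwise_general {p : C ⥤ S} {q : D ⥤ S} (F : C ⥤ D)
    (hcomm : F ⋙ q = p) (hp : IsIsofibration p)
    (hfib : ∀ s : S, (fiberFunctor p q F hcomm s).IsLeftAdjoint) :
    F.IsLeftAdjoint :=
  isLeftAdjoint_iff_hasTerminal_costructuredArrow.mpr fun d =>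
    have := hfib (q.obj d)
    hasTerminal_costructuredArrow_of_fiber F hcomm (⟨d, rfl⟩ : Fiber q (q.obj d)) hp

/-- Let `F : C ⟶ D` be a functor over a groupoid `S` (via isofibrations `p`, `q`
with `q ∘ F = p`).  If for every object `s` of `S` the induced functor between
fibers has a right adjoint, then `F` has a right adjoint. -/
theorem hasRightAdjoint_of_fiberwise {p : C ⥤ S} {q : D ⥤ S} (F : C ⥤ D)
    (hcomm : F ⋙ q = p) (hp : IsIsofibration p) (hq : IsIsofibration q)
    (hfib : ∀ s : S, (fiberFunctor p q F hcomm s).IsLeftAdjoint) :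
    F.IsLeftAdjoint :=
  hasRightAdjoint_of_fiberwise_general F hcomm hp hfib
end

section
/- Let C be a category with finite limits and let f : X ⟶ Y be an exponentiable arrow in C, i.e., the pullback functor f^* : C/Y ⟶ C/X has a right adjoint f_*. Then the polynomial endofunctor P_f : C ⟶ C defined as the composite C ⟶ C/X ⟶ C/Y ⟶ C (pullback along X ⟶ 1, then f_*, then forgetful functor) preserves pullbacks. -/
open CategoryTheory CategoryTheory.Limits

/-- Let `f : X ⟶ Y` be an exponentiable arrow in a category `C` with finite
limits, i.e. the pullback functor `f^* : C/Y ⥤ C/X` has a right adjoint `f_*`.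
Then the polynomial endofunctor `P_f = Y_! ∘ f_* ∘ X^* : C ⥤ C` preserves
pullbacks. -/
theorem polynomial_preserves_pullbacks {C : Type u} [Category.{v} C] [HasFiniteLimits C]
    {X Y : C} (f : X ⟶ Y) (fstar : Over X ⥤ Over Y) (adj : Over.pullback f ⊣ fstar) :
    Nonempty (PreservesLimitsOfShape WalkingCospan
      (Over.star X ⋙ fstar ⋙ Over.forget Y : C ⥤ C)) := by
  -- `Over.star X` and `fstar` are right adjoints, and `Over.forget Y` creates connected limits.
  have := adj.isRightAdjoint
  exact ⟨inferInstance⟩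
end
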